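/- arXiv:1212.6378 — 8 statements merged into one kernel-verified Lean document; each statement's English description precedes it below -/
import Mathlib

section
/- Let S be a normal d×d complex matrix. Then the 2d×2d block matrix [[I, S],[S†, S†S]] is separable as a (unnormalized) state on ℂ²⊗ℂᵈ, i.e., it is a finite sum of matrices of the form σ ⊗ P with σ a 2×2 positive semidefinite matrix and P a d×d positive semidefinite matrix. -/
open Matrix Kronecker Finset ComplexOrder

/-- 2x2 block matrix with n×n blocks, indexed by `Fin 2 × n`. -/
def blk {n : Type*} (A B C D : Matrix n n ℂ) :
    Matrix (Fin 2 × n) (Fin 2 × n) ℂ := fun p q =>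
  if p.1 = 0 then (if q.1 = 0 then A p.2 q.2 else B p.2 q.2)
  else (if q.1 = 0 then C p.2 q.2 else D p.2 q.2)

/-- Partial transpose on the first (qubit) factor. -/
def ptA {n : Type*} (ρ : Matrix (Fin 2 × n) (Fin 2 × n) ℂ) :
    Matrix (Fin 2 × n) (Fin 2 × n) ℂ := fun p q => ρ (q.1, p.2) (p.1, q.2)

/-- Separability of an (unnormalized) state on ℂ²⊗ℂⁿ. -/
def SepState {n : Type*} [Fintype n] (ρ : Matrix (Fin 2 × n) (Fin 2 × n) ℂ) : Prop :=
  ∃ (N : ℕ) (σ : Fin N → Matrix (Fin 2) (Fin 2) ℂ) (P : Fin N → Matrix n n ℂ),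
    (∀ i, (σ i).PosSemidef) ∧ (∀ i, (P i).PosSemidef) ∧ ρ = ∑ i, σ i ⊗ₖ P i

open scoped Matrix.Norms.L2Operator in
noncomputable instance matCSA {d : ℕ} : CStarAlgebra (Matrix (Fin d) (Fin d) ℂ) := { }

/-- The 2×2 matrix [[1, μ],[μ̄, |μ|²]] is PSD. -/
lemma sigma_psd (μ : ℂ) :
    (Matrix.of ![![1, μ], ![star μ, star μ * μ]]).PosSemidef := by
  have : Matrix.of ![![1, μ], ![star μ, star μ * μ]] =
      (Matrix.replicateCol Unit ![1, star μ])ᴴᴴ * (Matrix.replicateCol Unit ![1, star μ])ᴴ := by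
    ext i j
    fin_cases i <;> fin_cases j <;>
      simp [Matrix.mul_apply, Matrix.conjTranspose_apply, Matrix.replicateCol_apply]
  rw [this]
  exact Matrix.posSemidef_conjTranspose_mul_self _

theorem stmt3 {d : ℕ} (S : Matrix (Fin d) (Fin d) ℂ)
    (hS : Sᴴ * S = S * Sᴴ) :
    SepState (blk 1 S Sᴴ (Sᴴ * S)) := by
  have hnorm : IsStarNormal S := ⟨by
    rw [Commute, SemiconjBy, Matrix.star_eq_conjTranspose, hS]⟩
  have hfin : (spectrum ℂ S).Finite := S.finite_spectrum
  set F : Finset ℂ := hfin.toFinset with hF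
  set f : ℂ → ℂ → ℂ := fun μ z => if z = μ then 1 else 0 with hf
  have hcont : ∀ g : ℂ → ℂ, ContinuousOn g (spectrum ℂ S) :=
    fun g => hfin.continuousOn g
  set P : ℂ → Matrix (Fin d) (Fin d) ℂ := fun μ => cfc (f μ) S with hP
  -- Each P μ is PSD
  have hPpsd : ∀ μ, (P μ).PosSemidef := by
    intro μ
    have h1 : (P μ)ᴴ * P μ = P μ := by
      rw [hP, ← Matrix.star_eq_conjTranspose, ← cfc_star (f μ) S,
        ← cfc_mul _ _ S (hcont _) (hcont _)]
      apply cfc_congr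
      intro z _
      simp only [hf]
      split <;> simp
    rw [← h1]
    exact Matrix.posSemidef_conjTranspose_mul_self _
  -- Key resolution: ∑ μ ∈ F, g μ • P μ = cfc g S
  have key : ∀ g : ℂ → ℂ, (∑ μ ∈ F, g μ • P μ) = cfc g S := by
    intro g
    have : ∀ μ ∈ F, g μ • P μ = cfc (fun z => g μ • f μ z) S := by
      intro μ _
      rw [cfc_smul (g μ) (f μ) S (hcont _)]
    rw [Finset.sum_congr rfl this, ← cfc_sum _ S F (fun i _ => hcont _)]
    apply cfc_congr
    intro z hz
    have hzF : z ∈ F := hfin.mem_toFinset.mpr hz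
    simp only [Finset.sum_apply, hf, smul_eq_mul, mul_ite, mul_one, mul_zero]
    rw [Finset.sum_ite_eq F z g]
    simp [hzF]
  have h1 : (∑ μ ∈ F, (1 : ℂ) • P μ) = 1 := by
    rw [key (fun _ => 1)]; exact cfc_one ℂ S
  have h2 : (∑ μ ∈ F, μ • P μ) = S := by
    rw [key (fun z => z)]; exact cfc_id' ℂ S
  have h3 : (∑ μ ∈ F, (star μ) • P μ) = Sᴴ := by
    rw [key (fun z => star z), ← Matrix.star_eq_conjTranspose]
    exact cfc_star_id S
  have h4 : (∑ μ ∈ F, (star μ * μ) • P μ) = Sᴴ * S := by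
    rw [key (fun z => star z * z),
      cfc_mul _ _ S (hcont _) (hcont _), ← Matrix.star_eq_conjTranspose]
    rw [cfc_star_id S, cfc_id' ℂ S]
  have e1 : ∀ a b, ∑ μ ∈ F, P μ a b = (1 : Matrix (Fin d) (Fin d) ℂ) a b := by
    intro a b; rw [← h1, Matrix.sum_apply]; simp
  have e2 : ∀ a b, ∑ μ ∈ F, μ * P μ a b = S a b := by
    intro a b; rw [← h2, Matrix.sum_apply]; simp
  have e3 : ∀ a b, ∑ μ ∈ F, star μ * P μ a b = Sᴴ a b := by
    intro a b; rw [← h3, Matrix.sum_apply]; simp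
  have e4 : ∀ a b, ∑ μ ∈ F, star μ * μ * P μ a b = (Sᴴ * S) a b := by
    intro a b; rw [← h4, Matrix.sum_apply]; simp
  -- Assemble
  refine ⟨F.card,
    fun i => Matrix.of ![![1, (F.equivFin.symm i : ℂ)],
      ![star (F.equivFin.symm i : ℂ),
        star (F.equivFin.symm i : ℂ) * (F.equivFin.symm i : ℂ)]],
    fun i => P (F.equivFin.symm i),
    fun i => sigma_psd _, fun i => hPpsd _, ?_⟩
  have hsum : ∀ (M : ℂ → Matrix (Fin 2 × Fin d) (Fin 2 × Fin d) ℂ),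
      (∑ i : Fin F.card, M (F.equivFin.symm i)) = ∑ μ ∈ F, M μ := by
    intro M
    rw [← Finset.sum_coe_sort F M]
    exact Fintype.sum_equiv F.equivFin.symm _ _ (fun i => rfl)
  rw [hsum (fun μ => (Matrix.of ![![1, μ], ![star μ, star μ * μ]] :
      Matrix (Fin 2) (Fin 2) ℂ) ⊗ₖ P μ)]
  ext ⟨p, a⟩ ⟨q, b⟩
  rw [Matrix.sum_apply]
  simp only [Matrix.kroneckerMap_apply]
  fin_cases p <;> fin_cases q <;>
    simp only [blk, Fin.isValue, Fin.zero_eta, Fin.mk_one, Matrix.of_apply,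
      Matrix.cons_val', Matrix.cons_val_zero, Matrix.cons_val_one, Matrix.head_cons,
      Matrix.empty_val', Matrix.cons_val_fin_one, Fin.one_eq_zero_iff,
      if_true, if_false, one_mul, reduceIte]
  · exact (e1 a b).symm
  · exact (e2 a b).symm
  · exact (e3 a b).symm
  · exact (e4 a b).symm
end

section
/- Let X₁ be an invertible d×d complex matrix, X₂ a d×d complex matrix, and S a d×d complex matrix satisfying X₁†S†SX₁ = X₁†SS†X₁. Then the 2d×2d block matrix ρ with blocks ρ₁₁ = X₁†X₁, ρ₁₂ = X₁†SX₁, ρ₂₁ = X₁†S†X₁, ρ₂₂ = X₁†S†SX₁ + X₂†X₂ is separable on ℂ²⊗ℂᵈ. -/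
open Matrix Kronecker Finset ComplexOrder

/-! The hypothesis says, after cancelling the invertible `X₁`, that `S` is normal, so
`S = ∑ λ • E λ` over its spectrum, with spectral projections `E λ = (E λ)ᴴ * E λ` summing to `1`.
With `P λ = X₁ᴴ * E λ * X₁ ⪰ 0` this gives
`ρ = ∑ λ, ![1, λ]ᴴ ![1, λ] ⊗ P λ + ![0, 1]ᴴ ![0, 1] ⊗ X₂ᴴ * X₂`, a sum of products of
positive semidefinite matrices. -/

section Separable

variable {n : Type*} [Fintype n]

lemma sepState_zero : SepState (0 : Matrix (Fin 2 × n) (Fin 2 × n) ℂ) :=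
  ⟨0, Fin.elim0, Fin.elim0, Fin.rec0, Fin.rec0, by simp⟩

lemma sepState_kronecker {σ : Matrix (Fin 2) (Fin 2) ℂ} {P : Matrix n n ℂ}
    (hσ : σ.PosSemidef) (hP : P.PosSemidef) : SepState (σ ⊗ₖ P) :=
  ⟨1, fun _ => σ, fun _ => P, fun _ => hσ, fun _ => hP, by simp⟩

lemma SepState.add {ρ ρ' : Matrix (Fin 2 × n) (Fin 2 × n) ℂ} (hρ : SepState ρ)
    (hρ' : SepState ρ') : SepState (ρ + ρ') := by
  obtain ⟨N, σ, P, hσ, hP, rfl⟩ := hρ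
  obtain ⟨M, σ', P', hσ', hP', rfl⟩ := hρ'
  refine ⟨N + M, Fin.append σ σ', Fin.append P P', Fin.addCases ?_ ?_, Fin.addCases ?_ ?_, ?_⟩
  all_goals simp [Fin.sum_univ_add, *]

lemma sepState_sum {ι : Type*} (s : Finset ι) {ρ : ι → Matrix (Fin 2 × n) (Fin 2 × n) ℂ}
    (hρ : ∀ i ∈ s, SepState (ρ i)) : SepState (∑ i ∈ s, ρ i) :=
  Finset.sum_induction _ SepState (fun _ _ => SepState.add) sepState_zero hρ

lemma sepState_blk_of_eq_sum {ι : Type*} (s : Finset ι) (μ : ι → ℂ) (P : ι → Matrix n n ℂ)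
    (hP : ∀ i, (P i).PosSemidef) {Q : Matrix n n ℂ} (hQ : Q.PosSemidef) {A B C D : Matrix n n ℂ}
    (hA : A = ∑ i ∈ s, P i) (hB : B = ∑ i ∈ s, μ i • P i) (hC : C = ∑ i ∈ s, star (μ i) • P i)
    (hD : D = ∑ i ∈ s, (star (μ i) * μ i) • P i + Q) : SepState (blk A B C D) := by
  have : blk A B C D = ∑ i ∈ s, vecMulVec (star ![1, μ i]) ![1, μ i] ⊗ₖ P i
      + vecMulVec (star ![0, 1]) ![0, 1] ⊗ₖ Q := by
    subst hA hB hC hD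
    ext ⟨p, a⟩ ⟨q, b⟩
    fin_cases p <;> fin_cases q <;> simp [blk, Matrix.sum_apply]
  rw [this]
  exact (sepState_sum s fun i _ => sepState_kronecker (posSemidef_vecMulVec_star_self _) (hP i)).add
    (sepState_kronecker (posSemidef_vecMulVec_star_self _) hQ)

end Separable

open scoped Matrix.Norms.L2Operator

section SpectralProjection

variable {n : Type*} [Fintype n] [DecidableEq n]

noncomputable def spectralProj (S : Matrix n n ℂ) (z : ℂ) : Matrix n n ℂ :=
  open Classical in cfc (fun w => if w = z then (1 : ℂ) else 0) S

lemma cfc_eq_sum_spectralProj (S : Matrix n n ℂ) [IsStarNormal S] (f : ℂ → ℂ) :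
    cfc f S = ∑ z ∈ S.finite_spectrum.toFinset, f z • spectralProj S z := by
  classical
  calc cfc f S = cfc (∑ z ∈ S.finite_spectrum.toFinset,
        fun w => f z • if w = z then (1 : ℂ) else 0) S :=
        cfc_congr fun w hw => by simp [Finset.sum_apply, hw]
    _ = _ := by
        rw [cfc_sum (hf := fun _ _ => S.finite_spectrum.continuousOn _)]
        exact Finset.sum_congr rfl fun z _ =>
          cfc_smul (hf := S.finite_spectrum.continuousOn _) ..

lemma posSemidef_spectralProj (S : Matrix n n ℂ) [IsStarNormal S] (z : ℂ) :
    (spectralProj S z).PosSemidef := by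
  classical
  have : spectralProj S z = (spectralProj S z)ᴴ * spectralProj S z := by
    rw [← star_eq_conjTranspose, spectralProj, ← cfc_star,
      ← cfc_mul (hf := S.finite_spectrum.continuousOn _) (hg := S.finite_spectrum.continuousOn _)]
    refine cfc_congr fun w _ => ?_
    split_ifs <;> simp
  rw [this]
  exact posSemidef_conjTranspose_mul_self _

lemma conjTranspose_mul_cfc_mul_eq_sum (S X : Matrix n n ℂ) [IsStarNormal S] (f : ℂ → ℂ) :
    Xᴴ * cfc f S * X = ∑ z ∈ S.finite_spectrum.toFinset, f z • (Xᴴ * spectralProj S z * X) := by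
  simp only [cfc_eq_sum_spectralProj S f, Matrix.mul_sum, Matrix.sum_mul, mul_smul_comm,
    smul_mul_assoc]

end SpectralProjection

theorem stmt4 {d : ℕ} (X₁ X₂ S : Matrix (Fin d) (Fin d) ℂ) (hX : IsUnit X₁)
    (h : X₁ᴴ * Sᴴ * S * X₁ = X₁ᴴ * S * Sᴴ * X₁) :
    SepState (blk (X₁ᴴ * X₁) (X₁ᴴ * S * X₁) (X₁ᴴ * Sᴴ * X₁)
      (X₁ᴴ * Sᴴ * S * X₁ + X₂ᴴ * X₂)) := by
  have : IsStarNormal S := by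
    refine ⟨hX.star.mul_left_cancel (hX.mul_right_cancel ?_)⟩
    simpa only [star_eq_conjTranspose, Matrix.mul_assoc] using h
  have hconj := conjTranspose_mul_cfc_mul_eq_sum S X₁
  refine sepState_blk_of_eq_sum S.finite_spectrum.toFinset (fun z => z) _
    (fun z => (posSemidef_spectralProj S z).conjTranspose_mul_mul_same X₁)
    (posSemidef_conjTranspose_mul_self X₂) ?_ ?_ ?_ ?_
  · simpa [cfc_one ℂ S] using hconj 1
  · simpa [cfc_id' ℂ S] using hconj fun z => z
  · rw [← star_eq_conjTranspose S, ← cfc_star_id (R := ℂ) S]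
    exact hconj _
  · have hSS : Sᴴ * S = cfc (fun z : ℂ => star z * z) S := by
      rw [cfc_mul (fun z : ℂ => star z) (fun z => z) S, cfc_star_id (R := ℂ) S, cfc_id' ℂ S,
        star_eq_conjTranspose]
    rw [Matrix.mul_assoc X₁ᴴ, hSS, hconj]
end

section
/- Let ρ = [[A, B],[B†, C]] be a 2d×2d PPT state with A positive definite. Define X₁ = A^{1/2} and B̃ = A^{−1/2} B A^{−1/2}. Then ρ is SPPT (i.e., admits a decomposition of the form (2) in the SPPT construction with the condition X₁†S†SX₁ = X₁†SS†X₁) if and only if B†A⁻¹B = BA⁻¹B†. -/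
/-!
Write `A = X₁ᴴ X₁` with `X₁` invertible and `B = X₁ᴴ S X₁`. Since `X₁ A⁻¹ X₁ᴴ = 1`, the congruence
by `X₁` turns `Bᴴ A⁻¹ B` into `X₁ᴴ Sᴴ S X₁` and `B A⁻¹ Bᴴ` into `X₁ᴴ S Sᴴ X₁`, so the SPPT
normality condition is exactly `Bᴴ A⁻¹ B = B A⁻¹ Bᴴ`. Conversely, any factorization `A = X₁ᴴ X₁`
determines `S = X₁ᴴ⁻¹ B X₁⁻¹`, and `X₂` comes from factorizing the Schur complement
`C - Bᴴ A⁻¹ B`, which is positive semidefinite because `ρ` is.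
-/

open Matrix Kronecker Finset ComplexOrder

namespace Matrix

section CommRing

variable {n R : Type*} [Fintype n] [DecidableEq n] [CommRing R]

theorem mul_mul_mul_inv_mul_mul_mul {X Y : Matrix n n R} (hX : IsUnit X.det)
    (hY : IsUnit Y.det) (M N : Matrix n n R) :
    Y * M * X * (Y * X)⁻¹ * (Y * N * X) = Y * (M * N) * X := by
  rw [mul_inv_rev]
  calc Y * M * X * (X⁻¹ * Y⁻¹) * (Y * N * X)
      = Y * M * (X * X⁻¹) * (Y⁻¹ * Y) * N * X := by simp only [Matrix.mul_assoc]
    _ = Y * (M * N) * X := by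
      rw [mul_nonsing_inv _ hX, nonsing_inv_mul _ hY, Matrix.mul_one, Matrix.mul_one,
        Matrix.mul_assoc Y]

variable [StarRing R]

theorem isUnit_det_of_isUnit_det_conjTranspose_mul_self {X : Matrix n n R}
    (h : IsUnit (Xᴴ * X).det) : IsUnit X.det := by
  rw [det_mul] at h
  exact isUnit_of_mul_isUnit_right h

theorem conjTranspose_mul_inv_mul_of_factor {A B X S : Matrix n n R} (hA : IsUnit A.det)
    (hAX : A = Xᴴ * X) (hBX : B = Xᴴ * S * X) :
    Bᴴ * A⁻¹ * B = Xᴴ * (Sᴴ * S) * X ∧ B * A⁻¹ * Bᴴ = Xᴴ * (S * Sᴴ) * X := by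
  have hX : IsUnit X.det := isUnit_det_of_isUnit_det_conjTranspose_mul_self (hAX ▸ hA)
  have hXH : IsUnit Xᴴ.det := by rw [det_conjTranspose]; exact hX.star
  have hBH : Bᴴ = Xᴴ * Sᴴ * X := by simp [hBX, Matrix.mul_assoc]
  rw [hBH, hBX, hAX]
  exact ⟨mul_mul_mul_inv_mul_mul_mul hX hXH _ _, mul_mul_mul_inv_mul_mul_mul hX hXH _ _⟩

end CommRing

open scoped MatrixOrder in
theorem PosSemidef.exists_eq_conjTranspose_mul_self {n 𝕜 : Type*} [Fintype n] [DecidableEq n]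
    [RCLike 𝕜] {A : Matrix n n 𝕜} (hA : A.PosSemidef) : ∃ X : Matrix n n 𝕜, A = Xᴴ * X := by
  refine ⟨CFC.sqrt A, ?_⟩
  rw [(nonneg_iff_posSemidef.mp (CFC.sqrt_nonneg A)).1, CFC.sqrt_mul_sqrt_self A hA.nonneg]

theorem fromBlocks_eq_submatrix_blk {n : Type*} (A B C D : Matrix n n ℂ) :
    fromBlocks A B C D = (blk A B C D).submatrix (Sum.elim (Prod.mk 0) (Prod.mk 1))
      (Sum.elim (Prod.mk 0) (Prod.mk 1)) := by
  ext (i | i) (j | j) <;> rfl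

theorem PosSemidef.schurComplement_of_blk {n : Type*} [Fintype n] [DecidableEq n]
    {A B C : Matrix n n ℂ} (h : (blk A B Bᴴ C).PosSemidef) (hA : A.PosDef) :
    (C - Bᴴ * A⁻¹ * B).PosSemidef := by
  have : Invertible A := hA.isUnit.invertible
  rw [← PosDef.fromBlocks₁₁ B C hA, fromBlocks_eq_submatrix_blk]
  exact h.submatrix _

end Matrix

theorem stmt7_general {d : ℕ} (A B C : Matrix (Fin d) (Fin d) ℂ) (hA : A.PosDef)
    (hρ : (blk A B Bᴴ C).PosSemidef) :
    (∃ X₁ X₂ S : Matrix (Fin d) (Fin d) ℂ,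
        X₁ᴴ * Sᴴ * S * X₁ = X₁ᴴ * S * Sᴴ * X₁ ∧
        A = X₁ᴴ * X₁ ∧ B = X₁ᴴ * S * X₁ ∧
        C = X₁ᴴ * Sᴴ * S * X₁ + X₂ᴴ * X₂) ↔
      Bᴴ * A⁻¹ * B = B * A⁻¹ * Bᴴ := by
  have hAdet : IsUnit A.det := (isUnit_iff_isUnit_det A).mp hA.isUnit
  constructor
  · rintro ⟨X₁, X₂, S, hnormal, hAX, hBX, -⟩
    obtain ⟨hl, hr⟩ := conjTranspose_mul_inv_mul_of_factor hAdet hAX hBX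
    simpa only [hl, hr, Matrix.mul_assoc] using hnormal
  · intro h
    obtain ⟨X₁, hAX⟩ := hA.posSemidef.exists_eq_conjTranspose_mul_self
    obtain ⟨X₂, hX₂⟩ := (hρ.schurComplement_of_blk hA).exists_eq_conjTranspose_mul_self
    have hX₁ : IsUnit X₁.det := isUnit_det_of_isUnit_det_conjTranspose_mul_self (hAX ▸ hAdet)
    have hX₁H : IsUnit X₁ᴴ.det := by rw [det_conjTranspose]; exact hX₁.star
    set S := X₁ᴴ⁻¹ * B * X₁⁻¹
    have hBX : B = X₁ᴴ * S * X₁ :=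
      calc B = X₁ᴴ * X₁ᴴ⁻¹ * B * (X₁⁻¹ * X₁) := by
            rw [mul_nonsing_inv _ hX₁H, nonsing_inv_mul _ hX₁, Matrix.one_mul, Matrix.mul_one]
        _ = X₁ᴴ * S * X₁ := by simp only [S, Matrix.mul_assoc]
    obtain ⟨hl, hr⟩ := conjTranspose_mul_inv_mul_of_factor hAdet hAX hBX
    refine ⟨X₁, X₂, S, ?_, hAX, hBX, ?_⟩
    · simpa only [hl, hr, Matrix.mul_assoc] using h
    · rw [← hX₂, Matrix.mul_assoc X₁ᴴ Sᴴ, ← hl]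
      abel

theorem stmt7 {d : ℕ} (A B C : Matrix (Fin d) (Fin d) ℂ) (hA : A.PosDef)
    (hρ : (blk A B Bᴴ C).PosSemidef)
    (hppt : (blk A Bᴴ B C).PosSemidef) :
    (∃ X₁ X₂ S : Matrix (Fin d) (Fin d) ℂ,
        X₁ᴴ * Sᴴ * S * X₁ = X₁ᴴ * S * Sᴴ * X₁ ∧
        A = X₁ᴴ * X₁ ∧ B = X₁ᴴ * S * X₁ ∧
        C = X₁ᴴ * Sᴴ * S * X₁ + X₂ᴴ * X₂) ↔
      Bᴴ * A⁻¹ * B = B * A⁻¹ * Bᴴ :=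
  stmt7_general A B C hA hρ
end

section
/- With the notation of the rank-reduction construction (rank(X₁) = k, X₁ = UΣV†, S̃ = U†SU, D_k the invertible k×k diagonal of singular values), the 2k×2k block matrix τ = [[D_k², D_kS̃₁₁D_k],[D_kS̃₁₁†D_k, D_k(S̃₁₁†S̃₁₁ + S̃₂₁†S̃₂₁)D_k]] is positive semidefinite and PPT. -/
/-
Up to the Hermitian sandwich by `D_k`, `τ` is the Gram matrix of the two block columns
`(1; 0)` and `(S̃₁₁; S̃₂₁)`, hence positive semidefinite. Its partial transpose has the same shape
with `S̃₁₁†, S̃₁₂†` in place of `S̃₁₁, S̃₂₁`, provided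
`D_k (S̃₁₁†S̃₁₁ + S̃₂₁†S̃₂₁) D_k = D_k (S̃₁₁S̃₁₁† + S̃₁₂S̃₁₂†) D_k`; this is the top-left block of the
SPPT condition once the unitaries `U`, `V` of the singular value decomposition are conjugated away.
-/

open Matrix Kronecker Finset ComplexOrder

def blkEquiv (n : Type*) : Fin 2 × n ≃ n ⊕ n :=
  (finTwoEquiv.prodCongr (Equiv.refl n)).trans (Equiv.boolProdEquivSum n)

lemma blk_eq_submatrix_fromBlocks {n : Type*} (A B C D : Matrix n n ℂ) :
    blk A B C D = (fromBlocks A B C D).submatrix (blkEquiv n) (blkEquiv n) := by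
  ext ⟨i, x⟩ ⟨j, y⟩
  fin_cases i <;> fin_cases j <;> rfl

lemma posSemidef_blk_gram {m n : Type*} [Fintype m] [Fintype n] (X Y : Matrix m n ℂ) :
    (blk (Xᴴ * X) (Xᴴ * Y) (Yᴴ * X) (Yᴴ * Y)).PosSemidef := by
  rw [blk_eq_submatrix_fromBlocks, posSemidef_submatrix_equiv, ← fromRows_mul_fromCols,
    ← conjTranspose_fromCols_eq_fromRows_conjTranspose]
  exact posSemidef_conjTranspose_mul_self _

lemma posSemidef_blk_hermitian_sandwich {m n : Type*} [Fintype m] [Fintype n]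
    {D : Matrix n n ℂ} (hD : D.IsHermitian) (A : Matrix n n ℂ) (B : Matrix m n ℂ) :
    (blk (D * D) (D * A * D) (D * Aᴴ * D) (D * (Aᴴ * A + Bᴴ * B) * D)).PosSemidef := by
  have h := posSemidef_blk_gram (fromRows D (0 : Matrix m n ℂ)) (fromRows (A * D) (B * D))
  simp only [conjTranspose_fromRows_eq_fromCols_conjTranspose, fromCols_mul_fromRows,
    conjTranspose_zero, Matrix.zero_mul, Matrix.mul_zero, add_zero, conjTranspose_mul, hD.eq] at h
  simpa only [Matrix.mul_add, Matrix.add_mul, Matrix.mul_assoc] using h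

lemma ptA_blk {n : Type*} (A B C D : Matrix n n ℂ) :
    ptA (blk A B C D) = blk A C B D := by
  ext ⟨i, x⟩ ⟨j, y⟩
  fin_cases i <;> fin_cases j <;> rfl

section Blocks

variable {l n : Type*} [Fintype l] [Fintype n] {α : Type*} [Semiring α] [StarRing α]

lemma toBlocks₁₁_conjTranspose_mul_self (M : Matrix (l ⊕ n) (l ⊕ n) α) :
    (Mᴴ * M).toBlocks₁₁ = M.toBlocks₁₁ᴴ * M.toBlocks₁₁ + M.toBlocks₂₁ᴴ * M.toBlocks₂₁ := by
  conv_lhs => rw [← fromBlocks_toBlocks M, fromBlocks_conjTranspose, fromBlocks_multiply]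
  rfl

lemma toBlocks₁₁_mul_conjTranspose_self (M : Matrix (l ⊕ n) (l ⊕ n) α) :
    (M * Mᴴ).toBlocks₁₁ = M.toBlocks₁₁ * M.toBlocks₁₁ᴴ + M.toBlocks₁₂ * M.toBlocks₁₂ᴴ := by
  conv_lhs => rw [← fromBlocks_toBlocks M, fromBlocks_conjTranspose, fromBlocks_multiply]
  rfl

lemma toBlocks₁₁_conjTranspose_fromBlocks_mul_mul (D : Matrix l l α)
    (M : Matrix (l ⊕ n) (l ⊕ n) α) :
    ((fromBlocks D 0 0 0)ᴴ * M * fromBlocks D 0 0 0).toBlocks₁₁ = Dᴴ * M.toBlocks₁₁ * D := by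
  conv_lhs => rw [← fromBlocks_toBlocks M, fromBlocks_conjTranspose, fromBlocks_multiply,
    fromBlocks_multiply]
  simp

end Blocks

section Unitary

variable {n : Type*} [Fintype n] {α : Type*} [CommRing α] [StarRing α]

lemma conjTranspose_mul_conjTranspose_mul_mul (U F V M : Matrix n n α) :
    (U * F * Vᴴ)ᴴ * M * (U * F * Vᴴ) = V * (Fᴴ * (Uᴴ * M * U) * F) * Vᴴ := by
  simp only [conjTranspose_mul, conjTranspose_conjTranspose, Matrix.mul_assoc]

variable [DecidableEq n]

lemma unitary_conj_conjTranspose_mul_self {U : Matrix n n α} (hU : U ∈ unitaryGroup n α)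
    (S : Matrix n n α) : (Uᴴ * S * U)ᴴ * (Uᴴ * S * U) = Uᴴ * (Sᴴ * S) * U := by
  have h := map_mul (Unitary.conjStarAlgAut α _ (star ⟨U, hU⟩)) (star S) S
  simpa [star_eq_conjTranspose, Matrix.mul_assoc] using h.symm

lemma unitary_conj_mul_conjTranspose_self {U : Matrix n n α} (hU : U ∈ unitaryGroup n α)
    (S : Matrix n n α) : (Uᴴ * S * U) * (Uᴴ * S * U)ᴴ = Uᴴ * (S * Sᴴ) * U := by
  have h := map_mul (Unitary.conjStarAlgAut α _ (star ⟨U, hU⟩)) S (star S)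
  simpa [star_eq_conjTranspose, Matrix.mul_assoc] using h.symm

lemma sppt_of_unitary_frame {U V : Matrix n n α} (hU : U ∈ unitaryGroup n α)
    (hV : V ∈ unitaryGroup n α) {F S : Matrix n n α}
    (h : (U * F * Vᴴ)ᴴ * (Sᴴ * S) * (U * F * Vᴴ) = (U * F * Vᴴ)ᴴ * (S * Sᴴ) * (U * F * Vᴴ)) :
    Fᴴ * ((Uᴴ * S * U)ᴴ * (Uᴴ * S * U)) * F = Fᴴ * ((Uᴴ * S * U) * (Uᴴ * S * U)ᴴ) * F := by
  apply EquivLike.injective (Unitary.conjStarAlgAut α _ ⟨V, hV⟩)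
  rw [Unitary.conjStarAlgAut_apply, Unitary.conjStarAlgAut_apply,
    unitary_conj_conjTranspose_mul_self hU, unitary_conj_mul_conjTranspose_self hU]
  change V * _ * Vᴴ = V * _ * Vᴴ
  rwa [← conjTranspose_mul_conjTranspose_mul_mul, ← conjTranspose_mul_conjTranspose_mul_mul]

end Unitary

theorem stmt9_general {k m : ℕ}
    (U V : Matrix (Fin k ⊕ Fin m) (Fin k ⊕ Fin m) ℂ)
    (hU : U ∈ Matrix.unitaryGroup (Fin k ⊕ Fin m) ℂ)
    (hV : V ∈ Matrix.unitaryGroup (Fin k ⊕ Fin m) ℂ)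
    (σv : Fin k → ℝ)
    (Dk : Matrix (Fin k) (Fin k) ℂ) (hDk : Dk = Matrix.diagonal (fun i => (σv i : ℂ)))
    (X₁ S : Matrix (Fin k ⊕ Fin m) (Fin k ⊕ Fin m) ℂ)
    (hX₁ : X₁ = U * Matrix.fromBlocks Dk 0 0 0 * Vᴴ)
    (hsppt : X₁ᴴ * Sᴴ * S * X₁ = X₁ᴴ * S * Sᴴ * X₁)
    (St : Matrix (Fin k ⊕ Fin m) (Fin k ⊕ Fin m) ℂ) (hSt : St = Uᴴ * S * U)
    (τ : Matrix (Fin 2 × Fin k) (Fin 2 × Fin k) ℂ)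
    (hτ : τ = blk (Dk * Dk) (Dk * St.toBlocks₁₁ * Dk) (Dk * St.toBlocks₁₁ᴴ * Dk)
        (Dk * (St.toBlocks₁₁ᴴ * St.toBlocks₁₁ + St.toBlocks₂₁ᴴ * St.toBlocks₂₁) * Dk)) :
    τ.PosSemidef ∧ (ptA τ).PosSemidef := by
  have hD : Dk.IsHermitian := by
    simp [hDk, IsHermitian, diagonal_conjTranspose, Pi.star_def]
  have hframe := sppt_of_unitary_frame hU hV (F := fromBlocks Dk 0 0 0) (S := S)
    (by simpa only [hX₁, Matrix.mul_assoc] using hsppt)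
  rw [← hSt] at hframe
  have hcorner : Dk * (St.toBlocks₁₁ᴴ * St.toBlocks₁₁ + St.toBlocks₂₁ᴴ * St.toBlocks₂₁) * Dk =
      Dk * (St.toBlocks₁₁ * St.toBlocks₁₁ᴴ + St.toBlocks₁₂ * St.toBlocks₁₂ᴴ) * Dk := by
    simpa only [toBlocks₁₁_conjTranspose_fromBlocks_mul_mul, toBlocks₁₁_conjTranspose_mul_self,
      toBlocks₁₁_mul_conjTranspose_self, hD.eq] using congrArg toBlocks₁₁ hframe
  refine ⟨hτ ▸ posSemidef_blk_hermitian_sandwich hD _ _, ?_⟩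
  have h := posSemidef_blk_hermitian_sandwich hD St.toBlocks₁₁ᴴ St.toBlocks₁₂ᴴ
  rwa [conjTranspose_conjTranspose, conjTranspose_conjTranspose, ← hcorner, ← ptA_blk, ← hτ] at h

theorem stmt9 {k m : ℕ}
    (U V : Matrix (Fin k ⊕ Fin m) (Fin k ⊕ Fin m) ℂ)
    (hU : U ∈ Matrix.unitaryGroup (Fin k ⊕ Fin m) ℂ)
    (hV : V ∈ Matrix.unitaryGroup (Fin k ⊕ Fin m) ℂ)
    (σv : Fin k → ℝ) (hσ : ∀ i, 0 < σv i)
    (Dk : Matrix (Fin k) (Fin k) ℂ) (hDk : Dk = Matrix.diagonal (fun i => (σv i : ℂ)))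
    (X₁ S : Matrix (Fin k ⊕ Fin m) (Fin k ⊕ Fin m) ℂ)
    (hX₁ : X₁ = U * Matrix.fromBlocks Dk 0 0 0 * Vᴴ)
    (hsppt : X₁ᴴ * Sᴴ * S * X₁ = X₁ᴴ * S * Sᴴ * X₁)
    (St : Matrix (Fin k ⊕ Fin m) (Fin k ⊕ Fin m) ℂ) (hSt : St = Uᴴ * S * U)
    (τ : Matrix (Fin 2 × Fin k) (Fin 2 × Fin k) ℂ)
    (hτ : τ = blk (Dk * Dk) (Dk * St.toBlocks₁₁ * Dk) (Dk * St.toBlocks₁₁ᴴ * Dk)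
        (Dk * (St.toBlocks₁₁ᴴ * St.toBlocks₁₁ + St.toBlocks₂₁ᴴ * St.toBlocks₂₁) * Dk)) :
    τ.PosSemidef ∧ (ptA τ).PosSemidef :=
  stmt9_general U V hU hV σv Dk hDk X₁ S hX₁ hsppt St hSt τ hτ
end

section
/- Fix 0 < b < 1 and set β₁ = √((1−b)/(2b)), β₂ = √((1+b)/(2b)). Let X₁ be the 5×5 diagonal matrix diag(1,1,1,1,0) and S the 5×5 matrix with S₁₂ = S₂₃ = S₃₄ = 1, S₁₅ = β₁, S₄₅ = β₂, S₅₁ = β₂, S₅₄ = β₁, and all other entries 0. Then X₁†S†SX₁ = X₁†SS†X₁, i.e., the pair (X₁, S) satisfies the SPPT condition. -/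
open Matrix Kronecker Finset ComplexOrder

set_option maxHeartbeats 2000000 in
theorem stmt13 (b : ℝ) (hb0 : 0 < b) (hb1 : b < 1)
    (β₁ β₂ : ℝ) (hβ₁ : β₁ = Real.sqrt ((1 - b) / (2 * b)))
    (hβ₂ : β₂ = Real.sqrt ((1 + b) / (2 * b)))
    (X₁ S : Matrix (Fin 5) (Fin 5) ℂ)
    (hX₁ : X₁ = Matrix.diagonal ![1, 1, 1, 1, 0])
    (hS : S = !![0, 1, 0, 0, (β₁ : ℂ);
                 0, 0, 1, 0, 0;
                 0, 0, 0, 1, 0;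
                 0, 0, 0, 0, (β₂ : ℂ);
                 (β₂ : ℂ), 0, 0, (β₁ : ℂ), 0]) :
    X₁ᴴ * Sᴴ * S * X₁ = X₁ᴴ * S * Sᴴ * X₁ := by
  have h1 : β₁^2 = (1-b)/(2*b) := by
    rw [hβ₁]; exact Real.sq_sqrt (div_nonneg (by linarith) (by linarith))
  have h2 : β₂^2 = (1+b)/(2*b) := by
    rw [hβ₂]; exact Real.sq_sqrt (div_nonneg (by linarith) (by linarith))
  have keyR : β₂ * β₂ = β₁ * β₁ + 1 := by
    have h : β₂^2 = β₁^2 + 1 := by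
      rw [h1, h2]; field_simp; ring
    nlinarith [h]
  have key : (β₂:ℂ)^2 = (β₁:ℂ)^2 + 1 := by
    have : β₂^2 = β₁^2 + 1 := by nlinarith [keyR]
    exact_mod_cast this
  have hD : X₁ = !![1,0,0,0,0; 0,1,0,0,0; 0,0,1,0,0; 0,0,0,1,0; 0,0,0,0,0] := by
    rw [hX₁]; ext i j
    fin_cases i <;> fin_cases j <;>
      simp [Matrix.diagonal, Matrix.vecHead, Matrix.vecTail]
  subst hS hD
  ext i j
  fin_cases i <;> fin_cases j <;>
    simp [Matrix.mul_apply, Fin.sum_univ_five, Matrix.conjTranspose_apply,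
      Matrix.vecHead, Matrix.vecTail] <;>
    first
      | ring1
      | linear_combination key
      | linear_combination (2:ℂ) * key
      | linear_combination -key
end

section
/- There exists a separable 2⊗3 state that is not SPPT: the state ϱ₁ = [[ρ₁₁, ρ₁₂],[ρ₁₂†, ρ₂₂]] with ρ₁₁ = [[3,0,0],[0,4,2],[0,2,3]], ρ₁₂ = [[0,0,0],[0,0,1],[1,−1,0]], ρ₂₂ = [[2,1,−1],[1,6,1],[−1,1,3]] is separable (being a 2⊗3 PPT state) but there exist no 3×3 matrices X₁, X₂, S with X₁†S†SX₁ = X₁†SS†X₁, ρ₁₁ = X₁†X₁, ρ₁₂ = X₁†SX₁, ρ₂₂ = X₁†S†SX₁ + X₂†X₂. -/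
open Matrix Kronecker Finset ComplexOrder

/-!
Separability: the state and its partial transpose are both positive semidefinite, as explicit
LDLᴴ factorisations with positive pivots show, so Horodecki's theorem applies.

Not SPPT: if `ρ₁₁ = X₁ᴴX₁` is invertible (hence so is `X₁`) and `ρ₁₂ = X₁ᴴSX₁`, then
`X₁ᴴSᴴSX₁ = ρ₁₂ᴴρ₁₁⁻¹ρ₁₂` and `X₁ᴴSSᴴX₁ = ρ₁₂ρ₁₁⁻¹ρ₁₂ᴴ`, so the normality condition on `S` forces
these two matrices to agree. Here their `(0,0)` entries are `1/2` and `0`.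
-/

section SPPT

variable {n R : Type*} [Fintype n] [DecidableEq n] [CommRing R] [StarRing R]

theorem conjTranspose_mul_conjTranspose_mul_mul_eq {X : Matrix n n R} (hX : IsUnit X.det)
    (S : Matrix n n R) :
    Xᴴ * Sᴴ * S * X = (Xᴴ * S * X)ᴴ * (Xᴴ * X)⁻¹ * (Xᴴ * S * X) := by
  have hXH : IsUnit Xᴴ.det := by rwa [det_conjTranspose, isUnit_star]
  simp only [conjTranspose_mul, conjTranspose_conjTranspose, Matrix.mul_inv_rev, Matrix.mul_assoc,
    mul_nonsing_inv_cancel_left _ _ hX, nonsing_inv_mul_cancel_left _ _ hXH]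

theorem conjTranspose_mul_inv_mul_eq_of_sppt {A B X S : Matrix n n R} (hA : IsUnit A.det)
    (hAX : A = Xᴴ * X) (hBX : B = Xᴴ * S * X) (hS : Xᴴ * Sᴴ * S * X = Xᴴ * S * Sᴴ * X) :
    Bᴴ * A⁻¹ * B = B * A⁻¹ * Bᴴ := by
  have hX : IsUnit X.det := by
    rw [hAX, det_mul] at hA
    exact isUnit_of_mul_isUnit_right hA
  subst hAX hBX
  rw [← conjTranspose_mul_conjTranspose_mul_mul_eq hX, hS]
  simpa only [conjTranspose_mul, conjTranspose_conjTranspose, Matrix.mul_assoc] using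
    conjTranspose_mul_conjTranspose_mul_mul_eq hX Sᴴ

end SPPT

def rho11 : Matrix (Fin 3) (Fin 3) ℂ := !![3, 0, 0; 0, 4, 2; 0, 2, 3]

def rho12 : Matrix (Fin 3) (Fin 3) ℂ := !![0, 0, 0; 0, 0, 1; 1, -1, 0]

def rho22 : Matrix (Fin 3) (Fin 3) ℂ := !![2, 1, -1; 1, 6, 1; -1, 1, 3]

theorem rho11_mul_eq_one : rho11 * !![1/3, 0, 0; 0, 3/8, -1/4; 0, -1/4, 1/2] = 1 := by
  ext i j
  fin_cases i <;> fin_cases j <;>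
    simp [rho11, mul_apply, Fin.sum_univ_succ, one_apply] <;> norm_num

theorem rho12_conjTranspose_mul_inv_mul_ne :
    rho12ᴴ * rho11⁻¹ * rho12 ≠ rho12 * rho11⁻¹ * rho12ᴴ := by
  intro h
  have h00 := congrFun (congrFun h 0) 0
  simp [inv_eq_right_inv rho11_mul_eq_one, rho12, mul_apply, Fin.sum_univ_succ] at h00

theorem blk_rho_posSemidef : (blk rho11 rho12 rho12ᴴ rho22).PosSemidef := by
  have hLDL : blk rho11 rho12 rho12ᴴ rho22
      = (blk !![1, 0, 0; 0, 1, 1/2; 0, 0, 1] !![0, 0, 0; 0, 0, 1/4; 1/2, -1/2, -1/4]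
          0 !![1, 1, -1/2; 0, 1, 3/8; 0, 0, 1])ᴴ *
        diagonal (fun p : Fin 2 × Fin 3 =>
          if p.1 = 0 then ![3, 4, 2] p.2 else ![3/2, 4, 27/16] p.2) *
        (blk !![1, 0, 0; 0, 1, 1/2; 0, 0, 1] !![0, 0, 0; 0, 0, 1/4; 1/2, -1/2, -1/4]
          0 !![1, 1, -1/2; 0, 1, 3/8; 0, 0, 1]) := by
    ext ⟨i, j⟩ ⟨k, l⟩
    fin_cases i <;> fin_cases k <;> fin_cases j <;> fin_cases l <;>
      simp [rho11, rho12, rho22, blk, mul_apply, Fintype.sum_prod_type, Fin.sum_univ_succ,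
        diagonal] <;> norm_num [vecHead, vecTail, Complex.conj_ofNat]
  rw [hLDL]
  refine (posSemidef_diagonal_iff.mpr fun ⟨i, j⟩ => ?_).conjTranspose_mul_mul_same _
  fin_cases i <;> fin_cases j <;> norm_num [Complex.le_def]

theorem ptA_blk_rho_posSemidef : (ptA (blk rho11 rho12 rho12ᴴ rho22)).PosSemidef := by
  have hLDL : ptA (blk rho11 rho12 rho12ᴴ rho22)
      = (blk !![1, 0, 0; 0, 1, 1/2; 0, 0, 1] !![0, 0, 1/3; 0, 0, -1/4; 0, 1/2, 1/4]
          0 !![1, 1/2, -1/2; 0, 1, 1/4; 0, 0, 1])ᴴ *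
        diagonal (fun p : Fin 2 × Fin 3 =>
          if p.1 = 0 then ![3, 4, 2] p.2 else ![2, 5, 71/48] p.2) *
        (blk !![1, 0, 0; 0, 1, 1/2; 0, 0, 1] !![0, 0, 1/3; 0, 0, -1/4; 0, 1/2, 1/4]
          0 !![1, 1/2, -1/2; 0, 1, 1/4; 0, 0, 1]) := by
    ext ⟨i, j⟩ ⟨k, l⟩
    fin_cases i <;> fin_cases k <;> fin_cases j <;> fin_cases l <;>
      simp [rho11, rho12, rho22, ptA, blk, mul_apply, Fintype.sum_prod_type, Fin.sum_univ_succ,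
        diagonal] <;> norm_num [vecHead, vecTail, Complex.conj_ofNat]
  rw [hLDL]
  refine (posSemidef_diagonal_iff.mpr fun ⟨i, j⟩ => ?_).conjTranspose_mul_mul_same _
  fin_cases i <;> fin_cases j <;> norm_num [Complex.le_def]

theorem stmt17 (ρ₁₁ ρ₁₂ ρ₂₂ : Matrix (Fin 3) (Fin 3) ℂ)
    (h11 : ρ₁₁ = !![3, 0, 0; 0, 4, 2; 0, 2, 3])
    (h12 : ρ₁₂ = !![0, 0, 0; 0, 0, 1; 1, -1, 0])
    (h22 : ρ₂₂ = !![2, 1, -1; 1, 6, 1; -1, 1, 3])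
    (horodecki : ∀ τ : Matrix (Fin 2 × Fin 3) (Fin 2 × Fin 3) ℂ,
        τ.PosSemidef → (ptA τ).PosSemidef → SepState τ) :
    SepState (blk ρ₁₁ ρ₁₂ ρ₁₂ᴴ ρ₂₂) ∧
    ¬ ∃ X₁ X₂ S : Matrix (Fin 3) (Fin 3) ℂ,
        X₁ᴴ * Sᴴ * S * X₁ = X₁ᴴ * S * Sᴴ * X₁ ∧
        ρ₁₁ = X₁ᴴ * X₁ ∧ ρ₁₂ = X₁ᴴ * S * X₁ ∧
        ρ₂₂ = X₁ᴴ * Sᴴ * S * X₁ + X₂ᴴ * X₂ := by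
  obtain rfl : ρ₁₁ = rho11 := h11
  obtain rfl : ρ₁₂ = rho12 := h12
  obtain rfl : ρ₂₂ = rho22 := h22
  refine ⟨horodecki _ blk_rho_posSemidef ptA_blk_rho_posSemidef, ?_⟩
  rintro ⟨X₁, -, S, hS, hρ₁₁, hρ₁₂, -⟩
  exact rho12_conjTranspose_mul_inv_mul_ne <| conjTranspose_mul_inv_mul_eq_of_sppt
    (isUnit_det_of_right_inverse rho11_mul_eq_one) hρ₁₁ hρ₁₂ hS
end

section
/- If ρ is a 2⊗d SPPT state and V is an invertible d×d matrix, then (1⊗V)†ρ(1⊗V) is also a 2⊗d SPPT state. -/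
open Matrix Kronecker Finset ComplexOrder

/-- A 2⊗d state is SPPT if it arises from the canonical Cholesky-type
construction with the SPPT condition. -/
def IsSPPT {d : ℕ} (ρ : Matrix (Fin 2 × Fin d) (Fin 2 × Fin d) ℂ) : Prop :=
  ∃ X₁ X₂ S : Matrix (Fin d) (Fin d) ℂ,
    X₁ᴴ * Sᴴ * S * X₁ = X₁ᴴ * S * Sᴴ * X₁ ∧
    ρ = (blk X₁ (S * X₁) 0 X₂)ᴴ * blk X₁ (S * X₁) 0 X₂


lemma blk_mul_kron {d : ℕ} (A B C D V : Matrix (Fin d) (Fin d) ℂ) :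
    blk A B C D * ((1 : Matrix (Fin 2) (Fin 2) ℂ) ⊗ₖ V)
      = blk (A * V) (B * V) (C * V) (D * V) := by
  ext ⟨i, a⟩ ⟨j, b⟩
  simp only [mul_apply, blk, kroneckerMap_apply, Fintype.sum_prod_type, one_apply]
  fin_cases i <;> fin_cases j <;>
    simp [Fin.sum_univ_two, mul_apply, mul_comm]

theorem stmt18 {d : ℕ} (ρ : Matrix (Fin 2 × Fin d) (Fin 2 × Fin d) ℂ)
    (hρ : IsSPPT ρ) (V : Matrix (Fin d) (Fin d) ℂ) (hV : IsUnit V) :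
    IsSPPT (((1 : Matrix (Fin 2) (Fin 2) ℂ) ⊗ₖ V)ᴴ * ρ *
      ((1 : Matrix (Fin 2) (Fin 2) ℂ) ⊗ₖ V)) := by
  obtain ⟨X₁, X₂, S, hS, rfl⟩ := hρ
  refine ⟨X₁ * V, X₂ * V, S, ?_, ?_⟩
  · have h : Vᴴ * (X₁ᴴ * Sᴴ * S * X₁) * V = Vᴴ * (X₁ᴴ * S * Sᴴ * X₁) * V := by rw [hS]
    calc (X₁ * V)ᴴ * Sᴴ * S * (X₁ * V) = Vᴴ * (X₁ᴴ * Sᴴ * S * X₁) * V := by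
          simp only [conjTranspose_mul]; simp only [mul_assoc]
      _ = Vᴴ * (X₁ᴴ * S * Sᴴ * X₁) * V := h
      _ = (X₁ * V)ᴴ * S * Sᴴ * (X₁ * V) := by
          simp only [conjTranspose_mul]; simp only [mul_assoc]
  · have hb : blk X₁ (S * X₁) 0 X₂ * ((1 : Matrix (Fin 2) (Fin 2) ℂ) ⊗ₖ V)
        = blk (X₁ * V) (S * (X₁ * V)) 0 (X₂ * V) := by
      rw [blk_mul_kron]; rw [Matrix.zero_mul, mul_assoc]
    rw [← hb, conjTranspose_mul]
    simp only [mul_assoc]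
end

section
/- Let A be a d×d positive definite complex matrix and B, C d×d matrices such that both C − B†A⁻¹B and C − BA⁻¹B† are positive semidefinite, and suppose B†A⁻¹B = BA⁻¹B†. Setting X₁ = A^{1/2}, S = A^{−1/2}BA^{−1/2}, and choosing X₂ with X₂†X₂ = C − B†A⁻¹B, the block matrix [[A,B],[B†,C]] equals [[X₁†X₁, X₁†SX₁],[X₁†S†X₁, X₁†S†SX₁ + X₂†X₂]] and the SPPT condition X₁†S†SX₁ = X₁†SS†X₁ holds. -/
open Matrix Kronecker Finset ComplexOrder

/-- The positive semidefinite square root of a positive semidefinite matrix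
(the definition `Matrix.PosSemidef.sqrt` of the older Mathlib, since removed). -/
noncomputable def Matrix.PosSemidef.sqrt {n : Type*} [Fintype n] [DecidableEq n] {𝕜 : Type*}
    [RCLike 𝕜] {A : Matrix n n 𝕜} (hA : A.PosSemidef) : Matrix n n 𝕜 :=
  hA.1.eigenvectorUnitary.1 * diagonal ((↑) ∘ (√·) ∘ hA.1.eigenvalues) *
  (star hA.1.eigenvectorUnitary : Matrix n n 𝕜)

/-
X₁ = A^{1/2} is Hermitian and invertible, so conjugating S = X₁⁻¹ B X₁⁻¹ back by X₁ recovers B,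
while in X₁ S† S X₁ and X₁ S S† X₁ the two inner factors X₁⁻¹ X₁⁻¹ multiply to A⁻¹, leaving
B† A⁻¹ B and B A⁻¹ B†. The lower right block is then C, and the SPPT condition is the hypothesis
B† A⁻¹ B = B A⁻¹ B†.
-/

namespace Matrix

theorem PosSemidef.posSemidef_sqrt {n : Type*} [Fintype n] [DecidableEq n] {𝕜 : Type*}
    [RCLike 𝕜] {A : Matrix n n 𝕜} (hA : A.PosSemidef) : hA.sqrt.PosSemidef := by
  have hdiag : (diagonal ((↑) ∘ (√·) ∘ hA.1.eigenvalues : n → 𝕜)).PosSemidef :=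
    posSemidef_diagonal_iff.mpr fun i => RCLike.ofReal_nonneg.mpr (Real.sqrt_nonneg _)
  simpa [PosSemidef.sqrt, star_eq_conjTranspose] using
    hdiag.mul_mul_conjTranspose_same (hA.1.eigenvectorUnitary : Matrix n n 𝕜)

theorem PosSemidef.sqrt_mul_self {n : Type*} [Fintype n] [DecidableEq n] {𝕜 : Type*}
    [RCLike 𝕜] {A : Matrix n n 𝕜} (hA : A.PosSemidef) : hA.sqrt * hA.sqrt = A := by
  set U : Matrix n n 𝕜 := hA.1.eigenvectorUnitary.1
  have hUU : star U * U = 1 := Unitary.star_mul_self_of_mem hA.1.eigenvectorUnitary.2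
  have hsqrt : diagonal ((↑) ∘ (√·) ∘ hA.1.eigenvalues : n → 𝕜) *
      diagonal ((↑) ∘ (√·) ∘ hA.1.eigenvalues) = diagonal ((↑) ∘ hA.1.eigenvalues) := by
    rw [diagonal_mul_diagonal]
    congr 1
    funext i
    simp only [Function.comp_apply]
    rw [← RCLike.ofReal_mul, Real.mul_self_sqrt (hA.eigenvalues_nonneg i)]
  conv_rhs => rw [hA.1.spectral_theorem, Unitary.conjStarAlgAut_apply]
  calc hA.sqrt * hA.sqrt
      = U * diagonal ((↑) ∘ (√·) ∘ hA.1.eigenvalues) * (star U * U) *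
          diagonal ((↑) ∘ (√·) ∘ hA.1.eigenvalues) * star U := by
        simp only [PosSemidef.sqrt, U, Matrix.mul_assoc]
    _ = _ := by rw [hUU, Matrix.mul_one, Matrix.mul_assoc U, hsqrt]

theorem PosSemidef.conjTranspose_sqrt_mul_sqrt {n : Type*} [Fintype n] [DecidableEq n]
    {𝕜 : Type*} [RCLike 𝕜] {A : Matrix n n 𝕜} (hA : A.PosSemidef) :
    hA.sqrtᴴ * hA.sqrt = A := by
  rw [hA.posSemidef_sqrt.1.eq, hA.sqrt_mul_self]

section Congruence

variable {n R : Type*} [Fintype n] [DecidableEq n] [CommRing R] {X : Matrix n n R}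

theorem isUnit_det_of_mul_self_eq {A : Matrix n n R} (hXX : X * X = A) (hA : IsUnit A.det) :
    IsUnit X.det := by
  rw [← hXX, det_mul] at hA
  exact (IsUnit.mul_iff.mp hA).1

theorem mul_inv_mul_mul_inv_mul (hX : IsUnit X.det) (B : Matrix n n R) :
    X * (X⁻¹ * B * X⁻¹) * X = B := by
  simp only [Matrix.mul_assoc, nonsing_inv_mul _ hX, Matrix.mul_one, ← Matrix.mul_assoc X,
    mul_nonsing_inv _ hX, Matrix.one_mul]

theorem mul_inv_mul_mul_inv_mul_inv_mul_mul_inv_mul (hX : IsUnit X.det) (B C : Matrix n n R) :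
    X * (X⁻¹ * B * X⁻¹) * (X⁻¹ * C * X⁻¹) * X = B * (X * X)⁻¹ * C := by
  rw [Matrix.mul_inv_rev]
  simp only [Matrix.mul_assoc, nonsing_inv_mul _ hX, Matrix.mul_one, ← Matrix.mul_assoc X,
    mul_nonsing_inv _ hX, Matrix.one_mul]

theorem IsHermitian.conjTranspose_inv_mul_mul_inv [StarRing R] (hX : X.IsHermitian)
    (B : Matrix n n R) : (X⁻¹ * B * X⁻¹)ᴴ = X⁻¹ * Bᴴ * X⁻¹ := by
  rw [conjTranspose_mul, conjTranspose_mul, conjTranspose_nonsing_inv, hX.eq, Matrix.mul_assoc]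

end Congruence

end Matrix

theorem stmt19_general {d : ℕ} (A B C : Matrix (Fin d) (Fin d) ℂ) (hA : A.PosDef)
    (h1 : (C - Bᴴ * A⁻¹ * B).PosSemidef)
    (hcond : Bᴴ * A⁻¹ * B = B * A⁻¹ * Bᴴ)
    (X₁ S X₂ : Matrix (Fin d) (Fin d) ℂ)
    (hX₁ : X₁ = hA.posSemidef.sqrt)
    (hS : S = X₁⁻¹ * B * X₁⁻¹)
    (hX₂ : X₂ = h1.sqrt) :
    blk A B Bᴴ C =
      blk (X₁ᴴ * X₁) (X₁ᴴ * S * X₁) (X₁ᴴ * Sᴴ * X₁)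
        (X₁ᴴ * Sᴴ * S * X₁ + X₂ᴴ * X₂) ∧
    X₁ᴴ * Sᴴ * S * X₁ = X₁ᴴ * S * Sᴴ * X₁ := by
  have hX₁H : X₁.IsHermitian := hX₁ ▸ hA.posSemidef.posSemidef_sqrt.1
  have hX₁X₁ : X₁ * X₁ = A := hX₁ ▸ hA.posSemidef.sqrt_mul_self
  have hX₁det : IsUnit X₁.det :=
    isUnit_det_of_mul_self_eq hX₁X₁ ((isUnit_iff_isUnit_det A).mp hA.isUnit)
  have hSH : Sᴴ = X₁⁻¹ * Bᴴ * X₁⁻¹ := hS ▸ hX₁H.conjTranspose_inv_mul_mul_inv B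
  have hSHS : X₁ᴴ * Sᴴ * S * X₁ = Bᴴ * A⁻¹ * B := by
    rw [hX₁H.eq, hSH, hS, mul_inv_mul_mul_inv_mul_inv_mul_mul_inv_mul hX₁det, hX₁X₁]
  have hSSH : X₁ᴴ * S * Sᴴ * X₁ = B * A⁻¹ * Bᴴ := by
    rw [hX₁H.eq, hSH, hS, mul_inv_mul_mul_inv_mul_inv_mul_mul_inv_mul hX₁det, hX₁X₁]
  refine ⟨?_, by rw [hSHS, hSSH, hcond]⟩
  rw [hSHS, hX₁H.eq, hSH, hS, mul_inv_mul_mul_inv_mul hX₁det, mul_inv_mul_mul_inv_mul hX₁det,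
    hX₁X₁, hX₂, h1.conjTranspose_sqrt_mul_sqrt, add_sub_cancel]

theorem stmt19 {d : ℕ} (A B C : Matrix (Fin d) (Fin d) ℂ) (hA : A.PosDef)
    (h1 : (C - Bᴴ * A⁻¹ * B).PosSemidef)
    (h2 : (C - B * A⁻¹ * Bᴴ).PosSemidef)
    (hcond : Bᴴ * A⁻¹ * B = B * A⁻¹ * Bᴴ)
    (X₁ S X₂ : Matrix (Fin d) (Fin d) ℂ)
    (hX₁ : X₁ = hA.posSemidef.sqrt)
    (hS : S = X₁⁻¹ * B * X₁⁻¹)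
    (hX₂ : X₂ = h1.sqrt) :
    blk A B Bᴴ C =
      blk (X₁ᴴ * X₁) (X₁ᴴ * S * X₁) (X₁ᴴ * Sᴴ * X₁)
        (X₁ᴴ * Sᴴ * S * X₁ + X₂ᴴ * X₂) ∧
    X₁ᴴ * Sᴴ * S * X₁ = X₁ᴴ * S * Sᴴ * X₁ :=
  stmt19_general A B C hA h1 hcond X₁ S X₂ hX₁ hS hX₂
end
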